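/- Let X be a finite vertex set of a graph G. Define Γ_X := C_X ⊔ crit(X), where crit(X) is the set of critical subsets of X, topologized by declaring each singleton {C} (C ∈ C_X) open and, for each Y ∈ crit(X) and cofinite 𝒞 ⊆ C_X(Y), the sets 𝒞 ∪ {Y} open. Then Γ_X is a compact Hausdorff space in which C_X is a dense discrete open subspace, i.e. Γ_X is a Hausdorff compactification of the discrete space C_X with finite remainder crit(X). -/

import Mathlib

open SimpleGraph Set

variable {V : Type*}

/-- The set of components of `G - X` (the subgraph of `G` induced on `Xᶜ`). -/
abbrev Comps (G : SimpleGraph V) (X : Set V) := (G.induce Xᶜ).ConnectedComponent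

/-- The vertex set (in `V`) of a component of `G - X`. -/
def suppV (G : SimpleGraph V) (X : Set V) (C : Comps G X) : Set V :=
  Subtype.val '' {v | (G.induce Xᶜ).connectedComponentMk v = C}

/-- The neighbourhood `N(C) ⊆ X` of a component `C` of `G - X`. -/
def nbhd (G : SimpleGraph V) (X : Set V) (C : Comps G X) : Set V :=
  {x ∈ X | ∃ v ∈ suppV G X C, G.Adj x v}

/-- `C_X(Y)`: the components of `G - X` with neighbourhood exactly `Y`. -/
def compsWithNbhd (G : SimpleGraph V) (X Y : Set V) : Set (Comps G X) :=
  {C | nbhd G X C = Y}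

/-- A finite vertex set `Y` is critical if `C_Y(Y)` is infinite. -/
def Critical (G : SimpleGraph V) (Y : Set V) : Prop :=
  Y.Finite ∧ (compsWithNbhd G Y Y).Infinite

/-- The inclusion graph homomorphism `G - X' → G - X`, for `X ⊆ X'`. -/
def inclHom (G : SimpleGraph V) {X X' : Set V} (h : X ⊆ X') :
    (G.induce X'ᶜ) →g (G.induce Xᶜ) where
  toFun v := ⟨v.1, fun hv => v.2 (h hv)⟩
  map_rel' := fun hadj => hadj

/-- `c_{X',X}`: sends each component of `G - X'` to the component of `G - X`
containing it. -/
def compMap (G : SimpleGraph V) {X X' : Set V} (h : X ⊆ X') :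
    Comps G X' → Comps G X :=
  SimpleGraph.ConnectedComponent.map (inclHom G h)

/-- `crit(X)`: the critical subsets of `X`. -/
def CritIn (G : SimpleGraph V) (X : Set V) : Set (Set V) :=
  {Y | Y ⊆ X ∧ Critical G Y}

/-- `Γ_X = C_X ⊔ crit(X)`. -/
def Gamma (G : SimpleGraph V) (X : Set V) := Comps G X ⊕ CritIn G X

/-- The basic open sets of `Γ_X`: singletons of components, and, for each critical
`Y ⊆ X` and cofinite `𝒞 ⊆ C_X(Y)`, the set `𝒞 ∪ {Y}`. -/
def gammaBasic (G : SimpleGraph V) (X : Set V) : Set (Set (Gamma G X)) :=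
  {s | ∃ C : Comps G X, s = {Sum.inl C}} ∪
  {s | ∃ (Y : CritIn G X) (𝒞 : Set (Comps G X)),
      𝒞 ⊆ compsWithNbhd G X Y.1 ∧ (compsWithNbhd G X Y.1 \ 𝒞).Finite ∧
      s = Sum.inl '' 𝒞 ∪ {Sum.inr Y}}

/-- The topology of `Γ_X`. -/
def gammaTop (G : SimpleGraph V) (X : Set V) : TopologicalSpace (Gamma G X) :=
  .generateFrom (gammaBasic G X)

/-!
A set `Y ⊆ X` is critical iff `C_X(Y)` is infinite: `c_{X,Y}` embeds `C_X(Y)` into `C_Y(Y)`, and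
every component of `G - Y` avoiding the finite set `X` is the image of a component in `C_X(Y)`.
Hence all but finitely many components of `G - X` have a critical neighbourhood, and for each
critical `Y` the components in `C_X(Y)` converge to the point `Y` along the cofinite filter. So
`Γ_X` is covered by finitely many one-point compactifications `C_X(Y) ∪ {Y}` and finitely many
isolated points, hence compact, and each `Y` lies in the closure of `C_X` because `C_X(Y)` is
infinite. Hausdorffness only uses that the sets `C_X(Y)` are pairwise disjoint.
-/

open Filter Topology

section Components

variable {G : SimpleGraph V} {X Y : Set V}

lemma mem_suppV {C : Comps G X} {v : V} :
    v ∈ suppV G X C ↔ ∃ h : v ∈ Xᶜ, (G.induce Xᶜ).connectedComponentMk ⟨v, h⟩ = C := by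
  constructor
  · rintro ⟨w, hw, rfl⟩
    exact ⟨w.2, hw⟩
  · rintro ⟨h, hC⟩
    exact ⟨⟨v, h⟩, hC, rfl⟩

lemma suppV_nonempty (C : Comps G X) : (suppV G X C).Nonempty := by
  obtain ⟨v, rfl⟩ := C.exists_rep
  exact ⟨v.1, v, rfl, rfl⟩

lemma eq_of_mem_suppV {C C' : Comps G X} {v : V} (h : v ∈ suppV G X C)
    (h' : v ∈ suppV G X C') : C = C' := by
  obtain ⟨_, rfl⟩ := mem_suppV.1 h
  obtain ⟨_, rfl⟩ := mem_suppV.1 h'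
  rfl

lemma mem_suppV_of_adj {C : Comps G X} {u w : V} (hu : u ∈ suppV G X C) (hw : w ∉ X)
    (hadj : G.Adj u w) : w ∈ suppV G X C := by
  obtain ⟨hu', rfl⟩ := mem_suppV.1 hu
  refine mem_suppV.2 ⟨hw, ConnectedComponent.sound ?_⟩
  exact Adj.reachable (show (G.induce Xᶜ).Adj ⟨w, hw⟩ ⟨u, hu'⟩ from hadj.symm)

lemma nbhd_subset (C : Comps G X) : nbhd G X C ⊆ X :=
  fun _ h => h.1

lemma compMap_mk (hYX : Y ⊆ X) (v : ↥Xᶜ) :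
    compMap G hYX ((G.induce Xᶜ).connectedComponentMk v) =
      (G.induce Yᶜ).connectedComponentMk (inclHom G hYX v) :=
  ConnectedComponent.map_mk _ _

lemma suppV_subset_suppV_compMap (hYX : Y ⊆ X) (C : Comps G X) :
    suppV G X C ⊆ suppV G Y (compMap G hYX C) := by
  intro v hv
  obtain ⟨hvX, rfl⟩ := mem_suppV.1 hv
  exact mem_suppV.2 ⟨fun hvY => hvX (hYX hvY), (compMap_mk hYX ⟨v, hvX⟩).symm⟩

lemma mem_suppV_of_walk {C : Comps G X} (hC : nbhd G X C ⊆ Y) {a b : ↥Yᶜ}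
    (p : (G.induce Yᶜ).Walk a b) (ha : a.1 ∈ suppV G X C) : b.1 ∈ suppV G X C := by
  induction p with
  | nil => exact ha
  | @cons u m _ hadj _ ih =>
    refine ih (mem_suppV_of_adj ha (fun hmX => m.2 (hC ⟨hmX, u.1, ha, ?_⟩)) hadj)
    exact (show G.Adj u.1 m.1 from hadj).symm

lemma suppV_compMap (hYX : Y ⊆ X) {C : Comps G X} (hC : nbhd G X C ⊆ Y) :
    suppV G Y (compMap G hYX C) = suppV G X C := by
  refine Subset.antisymm (fun v hv => ?_) (suppV_subset_suppV_compMap hYX C)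
  obtain ⟨hvY, hv⟩ := mem_suppV.1 hv
  induction C using ConnectedComponent.ind with | h w => ?_
  rw [compMap_mk] at hv
  obtain ⟨p⟩ := ConnectedComponent.exact hv.symm
  exact mem_suppV_of_walk hC p ⟨w, rfl, rfl⟩

lemma nbhd_compMap (hYX : Y ⊆ X) {C : Comps G X} (hC : nbhd G X C ⊆ Y) :
    nbhd G Y (compMap G hYX C) = nbhd G X C := by
  ext x
  simp only [nbhd, suppV_compMap hYX hC, mem_ofPred_eq]
  exact ⟨fun ⟨hxY, h⟩ => ⟨hYX hxY, h⟩, fun h => ⟨hC h, h.2⟩⟩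

lemma disjoint_compsWithNbhd {Y Y' : Set V} (h : Y ≠ Y') :
    Disjoint (compsWithNbhd G X Y) (compsWithNbhd G X Y') :=
  disjoint_left.2 fun _ hC hC' => h (hC.symm.trans hC')

lemma injOn_compMap (hYX : Y ⊆ X) : InjOn (compMap G hYX) {C | nbhd G X C ⊆ Y} := by
  intro C₁ h₁ C₂ h₂ heq
  obtain ⟨v, hv⟩ := suppV_nonempty C₁
  refine eq_of_mem_suppV hv ?_
  rw [← suppV_compMap hYX h₂, ← heq, suppV_compMap hYX h₁]
  exact hv

lemma mapsTo_compMap (hYX : Y ⊆ X) :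
    MapsTo (compMap G hYX) (compsWithNbhd G X Y) (compsWithNbhd G Y Y) :=
  fun _ hC => (nbhd_compMap hYX hC.subset).trans hC

lemma exists_compMap_eq (hYX : Y ⊆ X) {D : Comps G Y} (hD : Disjoint (suppV G Y D) X) :
    ∃ C : Comps G X, nbhd G X C ⊆ Y ∧ compMap G hYX C = D := by
  obtain ⟨v, hv⟩ := suppV_nonempty D
  obtain ⟨_, hvD⟩ := mem_suppV.1 hv
  have hvX : v ∉ X := disjoint_left.1 hD hv
  have hmap : compMap G hYX ((G.induce Xᶜ).connectedComponentMk ⟨v, hvX⟩) = D := by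
    rw [compMap_mk, ← hvD]
    rfl
  refine ⟨_, fun x ⟨hxX, w, hw, hadj⟩ => ?_, hmap⟩
  by_contra hxY
  have hwD : w ∈ suppV G Y D := hmap ▸ suppV_subset_suppV_compMap hYX _ hw
  exact disjoint_left.1 hD (mem_suppV_of_adj hwD hxY hadj.symm) hxX

lemma finite_setOf_not_disjoint_suppV (hX : X.Finite) :
    {D : Comps G Y | ¬Disjoint (suppV G Y D) X}.Finite := by
  refine (hX.biUnion fun x _ => ?_).subset (s := ⋃ x ∈ X, {D | x ∈ suppV G Y D}) ?_
  · exact Subsingleton.finite fun D hD D' hD' => eq_of_mem_suppV hD hD'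
  · intro D hD
    obtain ⟨x, hxD, hxX⟩ := not_disjoint_iff.1 hD
    exact mem_biUnion hxX hxD

theorem critical_iff_infinite_compsWithNbhd (hX : X.Finite) (hYX : Y ⊆ X) :
    Critical G Y ↔ (compsWithNbhd G X Y).Infinite := by
  constructor
  · intro hcrit
    have hfar := hcrit.2.sdiff (finite_setOf_not_disjoint_suppV hX)
    refine Infinite.of_image (compMap G hYX) (hfar.mono ?_)
    rintro D ⟨hDY, hD⟩
    obtain ⟨C, hCY, rfl⟩ := exists_compMap_eq hYX (not_not.1 hD)
    exact ⟨C, (nbhd_compMap hYX hCY).symm.trans hDY, rfl⟩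
  · intro hinf
    refine ⟨hX.subset hYX, (hinf.image ?_).mono (mapsTo_compMap hYX).image_subset⟩
    exact (injOn_compMap hYX).mono fun C hC => hC.subset

lemma finite_setOf_not_critical_nbhd (hX : X.Finite) :
    {C : Comps G X | ¬Critical G (nbhd G X C)}.Finite := by
  refine (hX.finite_subsets.biUnion fun N hN => ?_).subset
    (s := ⋃ N ∈ {N | N ⊆ X}, {C | ¬Critical G N ∧ C ∈ compsWithNbhd G X N}) ?_
  · by_cases hN' : Critical G N
    · simp [hN']
    · exact not_infinite.1 (mt (critical_iff_infinite_compsWithNbhd hX hN).2 hN') |>.subset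
        fun _ h => h.2
  · intro C hC
    exact mem_biUnion (nbhd_subset C) ⟨hC, rfl⟩

lemma critIn_finite (hX : X.Finite) : (CritIn G X).Finite :=
  hX.finite_subsets.subset fun _ h => h.1

end Components

namespace Gamma

variable {G : SimpleGraph V} {X : Set V}

attribute [local instance] gammaTop

-- Naming the summands makes terms carry the type `Gamma G X`, and hence its topology.
def ofComp (C : Comps G X) : Gamma G X := Sum.inl C

def ofCrit (Y : CritIn G X) : Gamma G X := Sum.inr Y

lemma ofComp_injective : Function.Injective (ofComp (G := G) (X := X)) :=
  Sum.inl_injective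

@[simp]
lemma ofCrit_inj {Y Y' : CritIn G X} : ofCrit Y = ofCrit Y' ↔ Y = Y' :=
  Sum.inr_injective.eq_iff

@[simp]
lemma ofComp_ne_ofCrit (C : Comps G X) (Y : CritIn G X) : ofComp C ≠ ofCrit Y :=
  Sum.inl_ne_inr

@[simp]
lemma ofCrit_ne_ofComp (Y : CritIn G X) (C : Comps G X) : ofCrit Y ≠ ofComp C :=
  Sum.inr_ne_inl

def basicNbhd (Y : CritIn G X) (F : Set (Comps G X)) : Set (Gamma G X) :=
  ofComp '' (compsWithNbhd G X Y.1 \ F) ∪ {ofCrit Y}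

lemma isOpen_basicNbhd (Y : CritIn G X) {F : Set (Comps G X)} (hF : F.Finite) :
    IsOpen (basicNbhd Y F) := by
  refine TopologicalSpace.isOpen_generateFrom_of_mem (Or.inr ⟨Y, _, sdiff_subset, ?_, rfl⟩)
  rw [sdiff_sdiff_right_self]
  exact hF.inter_of_right _

lemma isOpen_singleton_ofComp (C : Comps G X) : IsOpen {ofComp C} :=
  TopologicalSpace.isOpen_generateFrom_of_mem (Or.inl ⟨C, rfl⟩)

lemma isOpen_range_ofComp : IsOpen (range (ofComp (G := G) (X := X))) := by
  rw [← iUnion_singleton_eq_range]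
  exact isOpen_iUnion isOpen_singleton_ofComp

lemma tendsto_ofComp_nhds_ofCrit (Y : CritIn G X) :
    Tendsto (fun C : compsWithNbhd G X Y.1 => ofComp C.1) cofinite (𝓝 (ofCrit Y)) := by
  refine TopologicalSpace.tendsto_nhds_generateFrom_iff.2 ?_
  rintro s (⟨C, rfl⟩ | ⟨Y', 𝒞, -, hfin, rfl⟩) hY
  · exact absurd hY (ofCrit_ne_ofComp Y C)
  · obtain rfl : Y' = Y := by
      rcases hY with ⟨_, -, h⟩ | h
      · cases h
      · exact (ofCrit_inj.1 h).symm
    refine (hfin.preimage Subtype.val_injective.injOn).subset fun C hC => ⟨C.2, fun h => hC ?_⟩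
    exact Or.inl ⟨C, h, rfl⟩

lemma t2Space : T2Space (Gamma G X) := by
  have hsep : ∀ (C : Comps G X) (Y : CritIn G X), Disjoint (𝓝 (ofComp C)) (𝓝 (ofCrit Y)) :=
    fun C Y => disjoint_of_disjoint_of_mem (by simp [basicNbhd, ofComp_injective.eq_iff])
      ((isOpen_singleton_ofComp C).mem_nhds rfl)
      ((isOpen_basicNbhd Y (finite_singleton C)).mem_nhds (Or.inr rfl))
  rw [t2Space_iff_disjoint_nhds]
  rintro (C | Y) (C' | Y') hne
  · exact disjoint_of_disjoint_of_mem (disjoint_singleton.2 hne)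
      ((isOpen_singleton_ofComp C).mem_nhds rfl) ((isOpen_singleton_ofComp C').mem_nhds rfl)
  · exact hsep C Y'
  · exact (hsep C' Y).symm
  · refine disjoint_of_disjoint_of_mem ?_
      ((isOpen_basicNbhd Y finite_empty).mem_nhds (Or.inr rfl))
      ((isOpen_basicNbhd Y' finite_empty).mem_nhds (Or.inr rfl))
    have hYY' : Y ≠ Y' := fun h => hne (congrArg Sum.inr h)
    simp [basicNbhd, hYY'.symm, disjoint_image_iff ofComp_injective,
      disjoint_compsWithNbhd (Subtype.coe_ne_coe.2 hYY')]

lemma compactSpace (hX : X.Finite) : CompactSpace (Gamma G X) := by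
  have : Finite (CritIn G X) := (critIn_finite hX).to_subtype
  have hcover : univ ⊆
      (⋃ Y, insert (ofCrit Y) (range fun C : compsWithNbhd G X Y.1 => ofComp C.1)) ∪
        ofComp '' {C | ¬Critical G (nbhd G X C)} := by
    rintro (C | Y) -
    · by_cases hC : Critical G (nbhd G X C)
      · exact Or.inl (mem_iUnion.2 ⟨⟨nbhd G X C, nbhd_subset C, hC⟩, Or.inr ⟨⟨C, rfl⟩, rfl⟩⟩)
      · exact Or.inr ⟨C, hC, rfl⟩
    · exact Or.inl (mem_iUnion.2 ⟨Y, Or.inl rfl⟩)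
  refine ⟨IsCompact.of_isClosed_subset ?_ isClosed_univ hcover⟩
  exact (isCompact_iUnion fun Y =>
    (tendsto_ofComp_nhds_ofCrit Y).isCompact_insert_range_of_cofinite).union
      ((finite_setOf_not_critical_nbhd hX).image ofComp).isCompact

lemma dense_range_ofComp (hX : X.Finite) : Dense (range (ofComp (G := G) (X := X))) := by
  rintro (C | Y)
  · exact subset_closure (mem_range_self C)
  · have : Infinite (compsWithNbhd G X Y.1) :=
      ((critical_iff_infinite_compsWithNbhd hX Y.2.1).1 Y.2.2).to_subtype
    exact mem_closure_of_tendsto (tendsto_ofComp_nhds_ofCrit Y)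
      (Eventually.of_forall fun C => mem_range_self _)

end Gamma

/-- `Γ_X` is a compact Hausdorff space in which `C_X` is a dense,
discrete, open subspace; the remainder `crit(X)` is finite. -/
theorem stmt13 (G : SimpleGraph V) (X : Set V) (hX : X.Finite) :
    @CompactSpace (Gamma G X) (gammaTop G X) ∧
    @T2Space (Gamma G X) (gammaTop G X) ∧
    @IsOpen (Gamma G X) (gammaTop G X) (Set.range (Sum.inl : Comps G X → Gamma G X)) ∧
    @Dense (Gamma G X) (gammaTop G X)
      (Set.range (Sum.inl : Comps G X → Gamma G X)) ∧
    (∀ C : Comps G X, @IsOpen (Gamma G X) (gammaTop G X) ({Sum.inl C} : Set (Gamma G X))) ∧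
    (CritIn G X).Finite :=
  ⟨Gamma.compactSpace hX, Gamma.t2Space, Gamma.isOpen_range_ofComp, Gamma.dense_range_ofComp hX,
    Gamma.isOpen_singleton_ofComp, critIn_finite hX⟩
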